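/- Let f₁, …, f_g be holomorphic functions on an open set U ⊆ ℂ, let φ : V → U be a holomorphic map with nowhere–vanishing derivative, and set h_k(w) = f_k(φ(w))·φ′(w), i.e. pull back each f_k dz as a 1-form under the change of coordinate z = φ(w). Then the g(g+1)/2-fold differential W(f₁,…,f_g)·(dz)^{⊗ g(g+1)/2} is invariant under this change of coordinate, i.e. W(h₁,…,h_g)(w) = W(f₁,…,f_g)(φ(w)) · φ′(w)^{g(g+1)/2}. -/

import Mathlib

open Finset Filter Topology

/-- The Wronskian `W(z) = det(f_k^{(l-1)}(z))` of a tuple of functions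
(the index `l` runs over `Fin g`, so `l` plays the role of `l-1`). -/
noncomputable def wronskian {g : ℕ} (f : Fin g → ℂ → ℂ) (z : ℂ) : ℂ :=
  Matrix.det (Matrix.of fun k l : Fin g => iteratedDeriv (l : ℕ) (f k) z)

/-- Key inductive lemma: the `l`-th derivative of `f(φ(w))·φ'(w)` is a universal
(`f`-independent) combination of the derivatives `f^{(j)}(φ(w))`, `j ≤ l`, with top
coefficient `φ'(w)^{l+1}`. -/
private lemma wronskian_key {U V : Set ℂ} (hV : IsOpen V)
    (φ : ℂ → ℂ) (hφa : AnalyticOnNhd ℂ φ V) (hφU : Set.MapsTo φ V U) (l : ℕ) :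
    ∃ c : ℕ → ℂ → ℂ,
      (∀ j, AnalyticOnNhd ℂ (c j) V) ∧
      (∀ j, l < j → c j = fun _ => 0) ∧
      (∀ w ∈ V, c l w = deriv φ w ^ (l + 1)) ∧
      ∀ (f : ℂ → ℂ), AnalyticOnNhd ℂ f U → ∀ w ∈ V,
        iteratedDeriv l (fun w => f (φ w) * deriv φ w) w
          = ∑ j ∈ Finset.range (l + 1), c j w * iteratedDeriv j f (φ w) := by
  induction l with
  | zero =>
    refine ⟨fun j => if j = 0 then deriv φ else fun _ => 0, ?_, ?_, ?_, ?_⟩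
    · intro j
      by_cases h : j = 0
      · simpa [h] using hφa.deriv_of_isOpen hV
      · simp only [if_neg h]; exact analyticOnNhd_const
    · intro j hj
      have h0 : j ≠ 0 := by omega
      simp [h0]
    · intro w hw; simp
    · intro f hf w hw; simp [mul_comm]
  | succ l ih =>
    obtain ⟨c, hca, hcz, hct, hcm⟩ := ih
    refine ⟨fun j w => deriv (c j) w +
      (if j = 0 then 0 else c (j - 1) w * deriv φ w), ?_, ?_, ?_, ?_⟩
    · intro j
      refine ((hca j).deriv_of_isOpen hV).add ?_
      by_cases h : j = 0
      · simp only [if_pos h]; exact analyticOnNhd_const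
      · simp only [if_neg h]
        exact (hca (j - 1)).mul (hφa.deriv_of_isOpen hV)
    · intro j hj
      funext x
      have h0 : j ≠ 0 := by omega
      show deriv (c j) x + (if j = 0 then 0 else c (j - 1) x * deriv φ x) = 0
      rw [hcz j (by omega), hcz (j - 1) (by omega), if_neg h0]
      simp
    · intro w hw
      have h0 : l + 1 ≠ 0 := Nat.succ_ne_zero l
      show deriv (c (l + 1)) w
          + (if l + 1 = 0 then 0 else c (l + 1 - 1) w * deriv φ w)
          = deriv φ w ^ (l + 1 + 1)
      rw [hcz (l + 1) (lt_add_one l), if_neg h0]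
      simp only [Nat.add_sub_cancel, hct w hw, pow_succ]
      simp
    · intro f hf w hw
      have hFa : ∀ j, AnalyticOnNhd ℂ (iteratedDeriv j f) U := fun j => by
        rw [iteratedDeriv_eq_iterate]; exact hf.iterated_deriv j
      have hφw : DifferentiableAt ℂ φ w := (hφa w hw).differentiableAt
      have hφUw : φ w ∈ U := hφU hw
      rw [iteratedDeriv_succ]
      have heq : iteratedDeriv l (fun w => f (φ w) * deriv φ w)
          =ᶠ[𝓝 w] fun x => ∑ j ∈ range (l + 1), c j x * iteratedDeriv j f (φ x) := by
        filter_upwards [hV.mem_nhds hw] with x hx using hcm f hf x hx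
      rw [heq.deriv_eq]
      have hdiff : ∀ j ∈ range (l + 1),
          DifferentiableAt ℂ (fun x => c j x * iteratedDeriv j f (φ x)) w := by
        intro j _
        exact ((hca j w hw).differentiableAt).mul
          (((hFa j (φ w) hφUw).differentiableAt).comp w hφw)
      rw [deriv_fun_sum hdiff]
      have term : ∀ j ∈ range (l + 1),
          deriv (fun x => c j x * iteratedDeriv j f (φ x)) w
            = deriv (c j) w * iteratedDeriv j f (φ w)
              + c j w * (iteratedDeriv (j + 1) f (φ w) * deriv φ w) := by
        intro j _
        have hd2 : DifferentiableAt ℂ (fun x => iteratedDeriv j f (φ x)) w :=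
          ((hFa j (φ w) hφUw).differentiableAt).comp w hφw
        rw [deriv_fun_mul ((hca j w hw).differentiableAt) hd2]
        congr 1
        rw [show (fun x => iteratedDeriv j f (φ x)) = (iteratedDeriv j f) ∘ φ from rfl,
          deriv_comp w (hFa j (φ w) hφUw).differentiableAt hφw, ← iteratedDeriv_succ]
      rw [Finset.sum_congr rfl term]
      have hz1 : deriv (c (l + 1)) w = 0 := by
        rw [hcz (l + 1) (lt_add_one l)]; simp
      symm
      calc ∑ j ∈ range (l + 1 + 1),
            (deriv (c j) w + if j = 0 then 0 else c (j - 1) w * deriv φ w)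
              * iteratedDeriv j f (φ w)
          = (∑ j ∈ range (l + 1 + 1), deriv (c j) w * iteratedDeriv j f (φ w))
            + ∑ j ∈ range (l + 1 + 1),
              (if j = 0 then 0 else c (j - 1) w * deriv φ w) * iteratedDeriv j f (φ w) := by
            simp only [add_mul, Finset.sum_add_distrib]
        _ = (∑ j ∈ range (l + 1), deriv (c j) w * iteratedDeriv j f (φ w))
            + ∑ j ∈ range (l + 1), c j w * (iteratedDeriv (j + 1) f (φ w) * deriv φ w) := by
            congr 1
            · rw [Finset.sum_range_succ, hz1, zero_mul, add_zero]
            · rw [Finset.sum_range_succ']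
              rw [if_pos rfl, zero_mul, add_zero]
              refine Finset.sum_congr rfl fun i _ => ?_
              rw [if_neg (Nat.succ_ne_zero i), Nat.add_sub_cancel]
              ring
        _ = ∑ j ∈ range (l + 1),
              (deriv (c j) w * iteratedDeriv j f (φ w)
                + c j w * (iteratedDeriv (j + 1) f (φ w) * deriv φ w)) := by
            rw [Finset.sum_add_distrib]

private lemma gauss_sum_aux (g : ℕ) : ∑ i ∈ Finset.range g, (i + 1) = g * (g + 1) / 2 := by
  have h : (∑ i ∈ Finset.range g, (i + 1)) * 2 = g * (g + 1) := by
    induction g with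
    | zero => simp
    | succ n ih => rw [Finset.sum_range_succ, add_mul, ih]; ring
  rw [← h, Nat.mul_div_cancel _ two_pos]

/-- Transformation law for the Wronskian under a holomorphic change of coordinate
`z = φ(w)` with nowhere vanishing derivative: if each `f_k dz` pulls back to
`h_k dw` with `h_k(w) = f_k(φ(w)) φ'(w)`, then
`W(h₁,…,h_g)(w) = W(f₁,…,f_g)(φ(w)) · φ'(w)^{g(g+1)/2}`; that is, the Wronskian
differential `W(f)·(dz)^{⊗ g(g+1)/2}` is coordinate independent. -/
theorem wronskian_change_of_coordinate {g : ℕ} {U V : Set ℂ} (hU : IsOpen U)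
    (hV : IsOpen V) (f : Fin g → ℂ → ℂ) (hf : ∀ k, DifferentiableOn ℂ (f k) U)
    (φ : ℂ → ℂ) (hφ : DifferentiableOn ℂ φ V) (hφU : Set.MapsTo φ V U)
    (hφ' : ∀ w ∈ V, deriv φ w ≠ 0) {w : ℂ} (hw : w ∈ V) :
    wronskian (fun k w => f k (φ w) * deriv φ w) w
      = wronskian f (φ w) * deriv φ w ^ (g * (g + 1) / 2) := by
  have hφa : AnalyticOnNhd ℂ φ V := hφ.analyticOnNhd hV
  have hfa : ∀ k, AnalyticOnNhd ℂ (f k) U := fun k => (hf k).analyticOnNhd hU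
  choose c hca hcz hct hcm using fun l : Fin g =>
    wronskian_key (U := U) hV φ hφa hφU (l : ℕ)
  set N : Matrix (Fin g) (Fin g) ℂ :=
    Matrix.of fun k j : Fin g => iteratedDeriv (j : ℕ) (f k) (φ w) with hN
  set A : Matrix (Fin g) (Fin g) ℂ :=
    Matrix.of fun j l : Fin g => c l (j : ℕ) w with hA
  have hM : (Matrix.of fun k l : Fin g =>
      iteratedDeriv (l : ℕ) (fun w => f k (φ w) * deriv φ w) w) = N * A := by
    ext k l
    rw [Matrix.mul_apply]
    have h1 : ∑ j : Fin g, N k j * A j l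
        = ∑ j ∈ Finset.range g, iteratedDeriv j (f k) (φ w) * c l j w := by
      rw [← Fin.sum_univ_eq_sum_range (fun j => iteratedDeriv j (f k) (φ w) * c l j w) g]
      rfl
    have h2 : ∑ j ∈ Finset.range ((l : ℕ) + 1), c l j w * iteratedDeriv j (f k) (φ w)
        = ∑ j ∈ Finset.range g, iteratedDeriv j (f k) (φ w) * c l j w := by
      rw [Finset.sum_congr rfl (fun j _ => mul_comm _ _)]
      refine Finset.sum_subset ?_ ?_
      · exact Finset.range_subset_range.mpr l.isLt
      · intro j _ hj
        rw [Finset.mem_range, not_lt] at hj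
        rw [hcz l j (by omega)]
        simp
    simp only [Matrix.of_apply]
    rw [hcm l (f k) (hfa k) w hw, h2, h1]
  have hAt : A.BlockTriangular id := by
    intro j l hjl
    simp only [id_eq] at hjl
    show c l (j : ℕ) w = 0
    rw [hcz l (j : ℕ) (by exact_mod_cast hjl)]
  unfold wronskian
  rw [hM, Matrix.det_mul, Matrix.det_of_upperTriangular hAt]
  congr 1
  have hdiag : ∀ l : Fin g, A l l = deriv φ w ^ ((l : ℕ) + 1) := fun l => hct l w hw
  rw [Finset.prod_congr rfl (fun l _ => hdiag l), Finset.prod_pow_eq_pow_sum]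
  congr 1
  rw [Fin.sum_univ_eq_sum_range (fun l => l + 1) g, gauss_sum_aux]
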